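/- Let q, t > 1 be real numbers and k ≥ 1 an integer. Define f on partitions of k by f(ρ) = (−1)^{k−ℓ(ρ)}·∏_{j=1}^{ℓ(ρ)} (1−q^{ρ_j})/(1−t^{ρ_j}). Then f is a right eigenfunction of the auxiliary variables kernel M with eigenvalue β = ((q−1)·(1−t^{−k}))/((q^k−1)·(1−t^{−1})); that is, for every partition ρ of k, Σ_{ν⊢k} M(ρ,ν)·f(ν) = β·f(ρ). (This is the case λ = (1^k) of the spectral theorem for M, using the closed form of the power-sum coefficients X_ρ^{(1^k)} of the Macdonald polynomial.) -/

import Mathlib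

/-!
Write `f(ν) = (-1)^k ∏ⱼ h(νⱼ)` with `h(p) = (q^p - 1)/(1 - t^p)` and expand `M(ρ, ν)` as a sum over
the kept parts `κ ⊊ ρ`. For fixed `κ` the `ν`-sum runs over `ν = μ + κ` with `μ ⊢ m = k - |κ|`, and
since `(1 - t^{-p}) h(p) = t^{-p} - (q t^{-1})^p` it is `t/(t-1) · ∏_κ h` times the cycle index
`∑_{μ ⊢ m} z_μ⁻¹ ∏ⱼ (a^{μⱼ} - b^{μⱼ}) = a^{m-1} (a - b)` at `a = t⁻¹`, `b = q t⁻¹` (the coefficient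
of `z^m` in `(1 - bz)/(1 - az)`). The weights `w_ρ(κ)` then make the `κ`-sum a binomial expansion
over sub-multisets: `∏_ρ (q^p - 1 + t^p h(p)) - ∏_ρ t^p h(p) = (1 - t^k) ∏_ρ h`.
-/

open Finset

/-- `z_λ = ∏_i i^{a_i(λ)} a_i(λ)!` for a multiset of parts. -/
def zWeight (m : Multiset ℕ) : ℕ :=
  ∏ i ∈ m.toFinset, i ^ m.count i * (m.count i).factorial

/-- `(x,y)_k = ∏_{i=0}^{k-1} (1 - x y^i)`. -/
noncomputable def poch (x y : ℝ) (k : ℕ) : ℝ :=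
  ∏ i ∈ Finset.range k, (1 - x * y ^ i)

/-- The measure `π_{q,t}` on partitions of `k`. -/
noncomputable def piQT (q t : ℝ) (k : ℕ) (l : Nat.Partition k) : ℝ :=
  (poch q q k / poch t q k) * ((zWeight l.parts : ℝ))⁻¹ *
    (l.parts.map (fun p => (1 - t ^ p) / (1 - q ^ p))).prod

/-- `π_{∞,t}` evaluated on a multiset of parts. -/
noncomputable def piInf (t : ℝ) (m : Multiset ℕ) : ℝ :=
  (t / (t - 1)) * ((zWeight m : ℝ))⁻¹ * (m.map (fun p => 1 - t⁻¹ ^ p)).prod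

/-- The weight `w_λ(κ)` of choosing the sub-multiset `κ` of kept parts. -/
noncomputable def wKeep (q : ℝ) (k : ℕ) (l κ : Multiset ℕ) : ℝ :=
  (q ^ k - 1)⁻¹ * ∏ i ∈ Finset.Icc 1 k,
    (Nat.choose (l.count i) (κ.count i) : ℝ) * (q ^ i - 1) ^ (l.count i - κ.count i)

/-- The auxiliary variables Markov kernel on partitions of `k`. -/
noncomputable def auxM (q t : ℝ) (k : ℕ) (l ν : Nat.Partition k) : ℝ :=
  ∑ κ ∈ l.parts.powerset.toFinset.filter (fun κ => κ ≤ ν.parts ∧ κ ≠ l.parts),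
    wKeep q k l.parts κ * piInf t (ν.parts - κ)

namespace Multiset

variable {α : Type*} [DecidableEq α]

theorem count_powerset_eq_prod_choose (s : Multiset α) {κ : Multiset α} {S : Finset α}
    (hs : s.toFinset ⊆ S) (hκ : κ.toFinset ⊆ S) :
    s.powerset.count κ = ∏ i ∈ S, (s.count i).choose (κ.count i) := by
  induction s using Multiset.induction_on generalizing κ with
  | empty =>
    obtain rfl | ⟨a, ha⟩ := κ.empty_or_exists_mem
    · simp
    · have hκ0 : κ ≠ 0 := by rintro rfl; exact notMem_zero a ha
      rw [powerset_zero, count_singleton, if_neg hκ0, eq_comm]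
      exact Finset.prod_eq_zero (hκ (mem_toFinset.2 ha))
        (Nat.choose_eq_zero_of_lt (by simpa using count_pos.2 ha))
  | cons a s ih =>
    have haS : a ∈ S := hs (by simp)
    have hsS : s.toFinset ⊆ S := (toFinset_subset.2 (subset_cons s a)).trans hs
    have hrest : ∀ κ' : Multiset α, (∀ i ∈ S.erase a, κ'.count i = κ.count i) →
        ∏ i ∈ S.erase a, (s.count i).choose (κ'.count i) =
          ∏ i ∈ S.erase a, ((a ::ₘ s).count i).choose (κ.count i) :=
      fun κ' h => Finset.prod_congr rfl fun i hi => by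
        rw [h i hi, count_cons_of_ne (Finset.ne_of_mem_erase hi)]
    rw [powerset_cons, count_add, ih hsS hκ, ← Finset.mul_prod_erase S _ haS,
      ← Finset.mul_prod_erase S _ haS, hrest κ fun _ _ => rfl, count_cons_self]
    by_cases haκ : a ∈ κ
    · obtain ⟨e, he⟩ : ∃ e, κ.count a = e + 1 :=
        Nat.exists_eq_succ_of_ne_zero (count_ne_zero.2 haκ)
      have hκ' : (κ.erase a).toFinset ⊆ S :=
        (toFinset_subset.2 (erase_subset a κ)).trans hκ
      rw [← cons_erase haκ, count_map_eq_count' _ _ fun _ _ => (cons_inj_right a).1, cons_erase haκ,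
        ih hsS hκ', ← Finset.mul_prod_erase S _ haS, count_erase_self, he,
        hrest _ fun i hi => count_erase_of_ne (Finset.ne_of_mem_erase hi) κ,
        Nat.add_sub_cancel, Nat.choose_succ_succ']
      ring
    · have hcount : (s.powerset.map (a ::ₘ ·)).count κ = 0 :=
        count_eq_zero.2 fun hmem => by
          obtain ⟨κ', -, rfl⟩ := mem_map.1 hmem
          exact haκ (mem_cons_self a κ')
      rw [hcount, count_eq_zero.2 haκ]
      simp

theorem sum_map_powerset_prod_sub_mul {R : Type*} [CommSemiring R] (s : Multiset α)
    (u v : α → R) :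
    (s.powerset.map fun κ => ((s - κ).map u).prod * (κ.map v).prod).sum =
      (s.map fun p => u p + v p).prod := by
  rw [prod_map_add, antidiagonal_eq_map_powerset, map_map]
  rfl

theorem prod_map_pow_eq_pow_sum {M : Type*} [CommMonoid M] (x : M) (m : Multiset ℕ) :
    (m.map (x ^ ·)).prod = x ^ m.sum :=
  Multiset.induction_on m (by simp) fun a m ih => by simp [pow_add, ih]

end Multiset

theorem zWeight_cons (a : ℕ) (m : Multiset ℕ) :
    zWeight (a ::ₘ m) = a * (m.count a + 1) * zWeight m := by
  have hterm : ∀ i, i ^ (a ::ₘ m).count i * ((a ::ₘ m).count i).factorial =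
      (if i = a then a * (m.count a + 1) else 1) * (i ^ m.count i * (m.count i).factorial) := by
    intro i
    rcases eq_or_ne i a with rfl | hi
    · rw [Multiset.count_cons_self, if_pos rfl, pow_succ, Nat.factorial_succ]
      ring
    · rw [Multiset.count_cons_of_ne hi, if_neg hi, one_mul]
  have hsub : m.toFinset ⊆ (a ::ₘ m).toFinset := by simp [Finset.subset_insert]
  have hm : zWeight m = ∏ i ∈ (a ::ₘ m).toFinset, i ^ m.count i * (m.count i).factorial :=
    Finset.prod_subset hsub fun i _ hi => by
      rw [Multiset.count_eq_zero.2 (by simpa using hi)]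
      simp
  rw [zWeight, Finset.prod_congr rfl fun i _ => hterm i, Finset.prod_mul_distrib,
    Finset.prod_ite_eq', if_pos (by simp), hm]

namespace Nat.Partition

theorem sum_ite_le_parts {M : Type*} [AddCommMonoid M] {n m : ℕ} {κ : Multiset ℕ}
    (hκ : ∀ i ∈ κ, 0 < i) (hm : m + κ.sum = n) (g : Multiset ℕ → M) :
    (∑ ν : n.Partition, if κ ≤ ν.parts then g ν.parts else 0) =
      ∑ μ : m.Partition, g (μ.parts + κ) := by
  rw [← Finset.sum_filter]
  refine Finset.sum_bij' (fun ν hν => ⟨ν.parts - κ, fun hi => ν.parts_pos (Multiset.mem_of_le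
      (Multiset.sub_le_self _ _) hi), ?_⟩)
    (fun μ _ => ⟨μ.parts + κ, fun hi => ?_, by rw [Multiset.sum_add, μ.parts_sum]; omega⟩)
    (fun _ _ => Finset.mem_univ _) (fun μ _ => by simp) (fun ν hν => ?_) (fun μ _ => by ext; simp)
    (fun ν hν => ?_)
  · have := congrArg Multiset.sum (tsub_add_cancel_of_le (Finset.mem_filter.1 hν).2)
    rw [Multiset.sum_add, ν.parts_sum] at this
    omega
  · exact (Multiset.mem_add.1 hi).elim μ.parts_pos (hκ _)
  · exact Nat.Partition.ext (tsub_add_cancel_of_le (Finset.mem_filter.1 hν).2)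
  · simp only [tsub_add_cancel_of_le (Finset.mem_filter.1 hν).2]

theorem parts_toFinset_subset_Icc {n : ℕ} (μ : n.Partition) :
    μ.parts.toFinset ⊆ Finset.Icc 1 n := fun i hi => by
  have hi := Multiset.mem_toFinset.1 hi
  exact Finset.mem_Icc.2 ⟨μ.parts_pos hi, le_of_mem_parts hi⟩

theorem sum_mul_count_parts {n : ℕ} (μ : n.Partition) :
    ∑ r ∈ Finset.Icc 1 n, r * μ.parts.count r = n := by
  rw [← Finset.sum_subset μ.parts_toFinset_subset_Icc fun r _ hr => ?_]
  · simpa [Finset.sum_multiset_count, mul_comm] using μ.parts_sum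
  · simp [Multiset.count_eq_zero.2 (by simpa using hr)]

theorem sum_lt_of_lt_parts {n : ℕ} (ρ : n.Partition) {κ : Multiset ℕ}
    (hκ : κ < ρ.parts) : κ.sum < n := by
  obtain ⟨d, hd⟩ := le_iff_exists_add.1 hκ.le
  obtain ⟨a, ha⟩ := Multiset.exists_mem_of_ne_zero fun hd0 : d = 0 => hκ.ne (by simp [hd, hd0])
  have hpos : 0 < a := ρ.parts_pos (hd ▸ Multiset.mem_add.2 (Or.inr ha))
  have hsum := congrArg Multiset.sum hd
  rw [ρ.parts_sum, Multiset.sum_add] at hsum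
  have := Multiset.le_sum_of_mem ha
  omega

end Nat.Partition

section CycleIndex

variable {K : Type*} [Field K]

/-- `∑_{μ ⊢ n} x_μ / z_μ` with `x_μ = ∏ⱼ x μⱼ`: the cycle index of `Sₙ` evaluated at the
power sums `x r`. -/
noncomputable def cycleIndex (x : ℕ → K) (n : ℕ) : K :=
  ∑ μ : n.Partition, (zWeight μ.parts : K)⁻¹ * (μ.parts.map x).prod

theorem cycleIndex_zero (x : ℕ → K) : cycleIndex x 0 = 1 := by
  simp [cycleIndex, zWeight]

theorem mul_count_mul_inv_zWeight_cons [CharZero K] {r : ℕ} (hr : r ≠ 0) (m : Multiset ℕ) :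
    ((r * (r ::ₘ m).count r : ℕ) : K) * (zWeight (r ::ₘ m) : K)⁻¹ = (zWeight m : K)⁻¹ := by
  have hr' : ((r * (m.count r + 1) : ℕ) : K) ≠ 0 :=
    Nat.cast_ne_zero.2 (Nat.mul_ne_zero hr (Nat.succ_ne_zero _))
  rw [zWeight_cons, Multiset.count_cons_self, Nat.cast_mul _ (zWeight m), mul_inv,
    ← mul_assoc, mul_inv_cancel₀ hr', one_mul]

theorem natCast_mul_cycleIndex [CharZero K] (x : ℕ → K) (n : ℕ) :
    n * cycleIndex x n = ∑ r ∈ Finset.Icc 1 n, x r * cycleIndex x (n - r) := by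
  have hn : ∀ μ : n.Partition, (n : K) = ∑ r ∈ Finset.Icc 1 n, ((r * μ.parts.count r : ℕ) : K) :=
    fun μ => by rw [← Nat.cast_sum, μ.sum_mul_count_parts]
  rw [cycleIndex, Finset.mul_sum, Finset.sum_congr rfl fun μ _ => by rw [hn μ, Finset.sum_mul],
    Finset.sum_comm]
  refine Finset.sum_congr rfl fun r hr => ?_
  obtain ⟨hr1, hrn⟩ := Finset.mem_Icc.1 hr
  have hsingle : ∀ μ : n.Partition,
      ((r * μ.parts.count r : ℕ) : K) * ((zWeight μ.parts : K)⁻¹ * (μ.parts.map x).prod) =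
        if {r} ≤ μ.parts then
          ((r * μ.parts.count r : ℕ) : K) * ((zWeight μ.parts : K)⁻¹ * (μ.parts.map x).prod)
        else 0 := fun μ => by
    split_ifs with h
    · rfl
    · rw [Multiset.count_eq_zero.2 (mt Multiset.singleton_le.2 h)]
      simp
  rw [Finset.sum_congr rfl fun μ _ => hsingle μ,
    Nat.Partition.sum_ite_le_parts (m := n - r) (by simp; omega) (by simp; omega)
      fun m => ((r * m.count r : ℕ) : K) * ((zWeight m : K)⁻¹ * (m.map x).prod),
    cycleIndex, Finset.mul_sum]
  refine Finset.sum_congr rfl fun μ _ => ?_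
  rw [add_comm, Multiset.singleton_add, Multiset.map_cons, Multiset.prod_cons, ← mul_assoc,
    mul_count_mul_inv_zWeight_cons (by omega)]
  ring

theorem cycleIndex_pow_sub_pow [CharZero K] (a b : K) {n : ℕ} (hn : 1 ≤ n) :
    cycleIndex (fun r => a ^ r - b ^ r) n = a ^ (n - 1) * (a - b) := by
  induction n using Nat.strong_induction_on with
  | _ n ih =>
  obtain ⟨m, rfl⟩ := Nat.exists_eq_add_of_le' hn
  have hrec := natCast_mul_cycleIndex (fun r => a ^ r - b ^ r) (m + 1)
  rw [← Finset.Ico_add_one_right_eq_Icc, Finset.sum_Ico_eq_sum_range, Nat.add_sub_cancel,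
    Finset.sum_range_succ, add_comm 1 m, Nat.sub_self, cycleIndex_zero, mul_one] at hrec
  have hterm : ∀ i ∈ Finset.range m, (a ^ (1 + i) - b ^ (1 + i)) *
      cycleIndex (fun r => a ^ r - b ^ r) (m + 1 - (1 + i)) =
        (a - b) * (a ^ m - b * (b ^ i * a ^ (m - 1 - i))) := fun i hi => by
    have hi := Finset.mem_range.1 hi
    rw [ih (m + 1 - (1 + i)) (by omega) (by omega), show m + 1 - (1 + i) - 1 = m - 1 - i by omega]
    have hpow : a ^ (1 + i) * a ^ (m - 1 - i) = a ^ m := by rw [← pow_add]; congr 1; omega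
    linear_combination (a - b) * hpow
  rw [Finset.sum_congr rfl hterm, ← Finset.mul_sum, Finset.sum_sub_distrib, Finset.sum_const,
    Finset.card_range, nsmul_eq_mul, ← Finset.mul_sum] at hrec
  have hgeom := geom_sum₂_mul b a m
  refine mul_left_cancel₀ (Nat.cast_add_one_ne_zero m) ?_
  push_cast at hrec ⊢
  linear_combination hrec + b * hgeom

end CycleIndex

theorem wKeep_eq_count_powerset_mul {q : ℝ} {k : ℕ} {s κ : Multiset ℕ}
    (hs : s.toFinset ⊆ Finset.Icc 1 k) (hκ : κ ≤ s) :
    wKeep q k s κ = (q ^ k - 1)⁻¹ * (s.powerset.count κ * ((s - κ).map (q ^ · - 1)).prod) := by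
  have hκS : κ.toFinset ⊆ Finset.Icc 1 k :=
    (Multiset.toFinset_subset.2 (Multiset.subset_of_le hκ)).trans hs
  have hsκS : (s - κ).toFinset ⊆ Finset.Icc 1 k :=
    (Multiset.toFinset_subset.2 (Multiset.subset_of_le (Multiset.sub_le_self s κ))).trans hs
  rw [wKeep, Finset.prod_mul_distrib, s.count_powerset_eq_prod_choose hs hκS, Nat.cast_prod,
    Finset.prod_multiset_map_count, Finset.prod_subset hsκS fun i _ hi => by
      rw [Multiset.count_eq_zero.2 (by simpa using hi), pow_zero]]
  simp only [Multiset.count_sub]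

theorem wKeep_self (q : ℝ) (k : ℕ) (s : Multiset ℕ) : wKeep q k s s = (q ^ k - 1)⁻¹ := by
  simp [wKeep]

theorem sum_wKeep_mul_prod (q : ℝ) {k : ℕ} {s : Multiset ℕ} (hs : s.toFinset ⊆ Finset.Icc 1 k)
    (v : ℕ → ℝ) :
    ∑ κ ∈ s.powerset.toFinset, wKeep q k s κ * (κ.map v).prod =
      (q ^ k - 1)⁻¹ * (s.map fun p => (q ^ p - 1) + v p).prod := by
  rw [← Multiset.sum_map_powerset_prod_sub_mul, Finset.sum_multiset_map_count, Finset.mul_sum]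
  refine Finset.sum_congr rfl fun κ hκ => ?_
  rw [wKeep_eq_count_powerset_mul hs (Multiset.mem_powerset.1 (Multiset.mem_toFinset.1 hκ)),
    nsmul_eq_mul]
  ring

theorem sum_erase_wKeep_mul_prod (q : ℝ) {k : ℕ} {s : Multiset ℕ}
    (hs : s.toFinset ⊆ Finset.Icc 1 k) (v : ℕ → ℝ) :
    ∑ κ ∈ s.powerset.toFinset.erase s, wKeep q k s κ * (κ.map v).prod =
      (q ^ k - 1)⁻¹ * ((s.map fun p => (q ^ p - 1) + v p).prod - (s.map v).prod) := by
  rw [Finset.sum_erase_eq_sub (Multiset.mem_toFinset.2 (Multiset.mem_powerset.2 le_rfl)),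
    sum_wKeep_mul_prod q hs, wKeep_self, mul_sub]

theorem one_sub_inv_pow_mul_div {q t : ℝ} {p : ℕ} (ht : t ≠ 0) (htp : t ^ p ≠ 1) :
    (1 - t⁻¹ ^ p) * ((q ^ p - 1) / (1 - t ^ p)) = t⁻¹ ^ p - (q * t⁻¹) ^ p := by
  have htp' : 1 - t ^ p ≠ 0 := sub_ne_zero.2 htp.symm
  rw [inv_pow, mul_pow, inv_pow]
  field_simp
  ring

theorem sub_one_add_pow_mul_div {q t : ℝ} {p : ℕ} (htp : t ^ p ≠ 1) :
    (q ^ p - 1) + t ^ p * ((q ^ p - 1) / (1 - t ^ p)) = (q ^ p - 1) / (1 - t ^ p) := by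
  have htp' : 1 - t ^ p ≠ 0 := sub_ne_zero.2 htp.symm
  field_simp
  ring

theorem sum_ite_le_parts_piInf_mul_prod (q : ℝ) {t : ℝ} (ht : 1 < t) {k : ℕ} {κ : Multiset ℕ}
    (hκ : ∀ i ∈ κ, 0 < i) (hκk : κ.sum < k) :
    (∑ ν : k.Partition, if κ ≤ ν.parts then
        piInf t (ν.parts - κ) * (ν.parts.map fun p => (q ^ p - 1) / (1 - t ^ p)).prod else 0) =
      t / (t - 1) * (1 - q) * t⁻¹ ^ k *
        (κ.map fun p => t ^ p * ((q ^ p - 1) / (1 - t ^ p))).prod := by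
  set h : ℕ → ℝ := fun p => (q ^ p - 1) / (1 - t ^ p)
  have hterm : ∀ μ : (k - κ.sum).Partition,
      piInf t (μ.parts + κ - κ) * ((μ.parts + κ).map h).prod =
        t / (t - 1) * ((zWeight μ.parts : ℝ)⁻¹ *
          (μ.parts.map fun p => t⁻¹ ^ p - (q * t⁻¹) ^ p).prod) * (κ.map h).prod := fun μ => by
    have hfactor : (μ.parts.map fun p => t⁻¹ ^ p - (q * t⁻¹) ^ p) =
        μ.parts.map fun p => (1 - t⁻¹ ^ p) * h p :=
      Multiset.map_congr rfl fun p hp =>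
        (one_sub_inv_pow_mul_div (by positivity) (one_lt_pow₀ ht (μ.parts_pos hp).ne').ne').symm
    rw [add_tsub_cancel_right, Multiset.map_add, Multiset.prod_add, piInf, hfactor,
      Multiset.prod_map_mul]
    ring
  rw [Nat.Partition.sum_ite_le_parts (m := k - κ.sum) hκ (by omega)
      fun ν => piInf t (ν - κ) * (ν.map h).prod,
    Finset.sum_congr rfl fun μ _ => hterm μ, ← Finset.sum_mul, ← Finset.mul_sum, ← cycleIndex,
    cycleIndex_pow_sub_pow _ _ (by omega), Multiset.prod_map_mul,
    Multiset.prod_map_pow_eq_pow_sum]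
  obtain ⟨m, hm⟩ : ∃ m, k - κ.sum = m + 1 := Nat.exists_eq_succ_of_ne_zero (by omega)
  have hkm : k = m + 1 + κ.sum := by omega
  rw [hm, Nat.add_sub_cancel, hkm, pow_add, pow_succ, inv_pow t κ.sum]
  field_simp
  rfl

theorem sum_auxM_mul (q t : ℝ) {k : ℕ} (ρ : k.Partition) (F : k.Partition → ℝ) :
    ∑ ν, auxM q t k ρ ν * F ν =
      ∑ κ ∈ ρ.parts.powerset.toFinset.erase ρ.parts, wKeep q k ρ.parts κ *
        ∑ ν : k.Partition, if κ ≤ ν.parts then piInf t (ν.parts - κ) * F ν else 0 := by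
  simp only [auxM, Finset.sum_mul, Finset.sum_filter]
  rw [Finset.sum_comm, ← Finset.filter_ne', Finset.sum_filter]
  refine Finset.sum_congr rfl fun κ _ => ?_
  split_ifs with hκ
  · rw [Finset.mul_sum]
    refine Finset.sum_congr rfl fun ν _ => ?_
    by_cases hle : κ ≤ ν.parts
    · simp only [hle, hκ, ne_eq, not_false_eq_true, and_self, if_true]
      ring
    · simp [hle]
  · simp [hκ]

theorem neg_one_pow_sub_card_mul_prod {k : ℕ} (ν : k.Partition) (g : ℕ → ℝ) :
    (-1 : ℝ) ^ (k - Multiset.card ν.parts) * (ν.parts.map g).prod =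
      (-1) ^ k * (ν.parts.map fun p => -g p).prod := by
  have hcard : Multiset.card ν.parts ≤ k := by
    simpa [ν.parts_sum] using
      Multiset.card_nsmul_le_sum (s := ν.parts) (a := 1) fun _ hp => ν.parts_pos hp
  rw [show (fun p => -g p) = Neg.neg ∘ g from rfl, ← Multiset.map_map, Multiset.prod_map_neg,
    pow_sub₀ _ (by norm_num) hcard, ← inv_pow, inv_neg_one, Multiset.card_map]
  ring

/-- The function `f(ρ) = (-1)^{k-ℓ(ρ)} ∏_j (1-q^{ρ_j})/(1-t^{ρ_j})` is a right eigenfunction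
of the auxiliary variables kernel with eigenvalue `(q-1)(1-t^{-k})/((q^k-1)(1-t^{-1}))`. -/
theorem auxM_eigenfunction_one_column
    (q t : ℝ) (hq : 1 < q) (ht : 1 < t) (k : ℕ) (hk : 1 ≤ k) :
    ∀ ρ : Nat.Partition k,
      (∑ ν : Nat.Partition k, auxM q t k ρ ν *
          ((-1 : ℝ) ^ (k - Multiset.card ν.parts) *
            (ν.parts.map (fun p => (1 - q ^ p) / (1 - t ^ p))).prod)) =
        ((q - 1) * (1 - t⁻¹ ^ k)) / ((q ^ k - 1) * (1 - t⁻¹)) *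
          ((-1 : ℝ) ^ (k - Multiset.card ρ.parts) *
            (ρ.parts.map (fun p => (1 - q ^ p) / (1 - t ^ p))).prod) := by
  intro ρ
  set h : ℕ → ℝ := fun p => (q ^ p - 1) / (1 - t ^ p)
  have hneg : (fun p => -((1 - q ^ p) / (1 - t ^ p))) = h :=
    funext fun p => by rw [← neg_div, neg_sub]
  have hinner : ∀ κ ∈ ρ.parts.powerset.toFinset.erase ρ.parts,
      wKeep q k ρ.parts κ * (∑ ν : k.Partition, if κ ≤ ν.parts then
        piInf t (ν.parts - κ) * (ν.parts.map h).prod else 0) =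
      t / (t - 1) * (1 - q) * t⁻¹ ^ k *
        (wKeep q k ρ.parts κ * (κ.map fun p => t ^ p * h p).prod) := fun κ hκ => by
    obtain ⟨hne, hmem⟩ := Finset.mem_erase.1 hκ
    have hlt : κ < ρ.parts :=
      lt_of_le_of_ne (Multiset.mem_powerset.1 (Multiset.mem_toFinset.1 hmem)) hne
    rw [sum_ite_le_parts_piInf_mul_prod q ht
      (fun i hi => ρ.parts_pos (Multiset.mem_of_le hlt.le hi)) (ρ.sum_lt_of_lt_parts hlt)]
    ring
  have hfactor : (ρ.parts.map fun p => (q ^ p - 1) + t ^ p * h p) = ρ.parts.map h :=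
    Multiset.map_congr rfl fun p hp =>
      sub_one_add_pow_mul_div (one_lt_pow₀ ht (ρ.parts_pos hp).ne').ne'
  have hqk : q ^ k - 1 ≠ 0 := (sub_pos.2 (one_lt_pow₀ hq (by omega))).ne'
  have ht1 : t - 1 ≠ 0 := (sub_pos.2 ht).ne'
  simp only [neg_one_pow_sub_card_mul_prod _ fun p => (1 - q ^ p) / (1 - t ^ p), hneg,
    mul_left_comm _ ((-1 : ℝ) ^ k), ← Finset.mul_sum]
  rw [sum_auxM_mul, Finset.sum_congr rfl hinner, ← Finset.mul_sum,
    sum_erase_wKeep_mul_prod q ρ.parts_toFinset_subset_Icc, hfactor, Multiset.prod_map_mul,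
    Multiset.prod_map_pow_eq_pow_sum, ρ.parts_sum, inv_pow]
  field_simp
  ring
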